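/- arXiv:math/0605231 — 2 statements merged into one kernel-verified Lean document; each statement's English description precedes it below -/
import Mathlib

section
/- Let p ≥ 3 be prime, α, β, γ ∈ Q_p with |α|_p, |β|_p, |γ|_p ≤ 1/p, and set a = exp_p(α), b = exp_p(β), c = exp_p(γ), f(x) = (a x + b)/(c + x). Then for all x, y in the set D = {z ∈ Q_p : |z|_p = 1 and |z − 1|_p ≤ 1/p}, one has |c + x|_p = 1, |c + y|_p = 1, and |f(x) − f(y)|_p ≤ (1/p)|x − y|_p. -/
noncomputable def pexp (p : ℕ) [Fact p.Prime] (x : ℚ_[p]) : ℚ_[p] :=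
  NormedSpace.exp x

noncomputable def plog (p : ℕ) [Fact p.Prime] (z : ℚ_[p]) : ℚ_[p] :=
  ∑' n : ℕ, (-1) ^ n * (z - 1) ^ (n + 1) / (n + 1)

/-! For `‖u‖ ≤ p⁻¹` the term `uⁿ/n!` of the exponential series has norm at most
`p⁻¹ ^ (n - v_p(n!))`. By Legendre's formula `v_p(n!) < n` for `n ≥ 1`, and `2 v_p(n!) ≤ n` when
`p ≥ 3`, so the series converges and `exp_p u ≡ 1 mod p`. Hence `c + x ≡ 2` is a unit, and
`f x - f y = (a c - b)(x - y) / ((c + x)(c + y))` with `a c - b ≡ 1 · 1 - 1 = 0 mod p`. -/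

open Filter Nat

section Ultrametric

variable {K : Type*} [NormedRing K] [IsUltrametricDist K]

lemma norm_mul_sub_le_of_norm_sub_one_le {a b c : K} {r : ℝ} (hr : r ≤ 1)
    (ha : ‖a - 1‖ ≤ r) (hb : ‖b - 1‖ ≤ r) (hc : ‖c - 1‖ ≤ r) : ‖a * c - b‖ ≤ r := by
  have hac : ‖(a - 1) * (c - 1)‖ ≤ r :=
    (norm_mul_le _ _).trans <| by nlinarith [norm_nonneg (a - 1), norm_nonneg (c - 1)]
  have hsplit : a * c - b = (a - 1) * (c - 1) + (a - 1) + (c - 1) + -(b - 1) := by noncomm_ring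
  rw [hsplit]
  refine (IsUltrametricDist.norm_add_le_max _ _).trans (max_le ?_ (by rwa [norm_neg]))
  refine (IsUltrametricDist.norm_add_le_max _ _).trans (max_le ?_ hc)
  exact (IsUltrametricDist.norm_add_le_max _ _).trans (max_le hac ha)

lemma norm_add_eq_one_of_norm_sub_one_lt {c z : K} (h2 : ‖(2 : K)‖ = 1)
    (hc : ‖c - 1‖ < 1) (hz : ‖z - 1‖ < 1) : ‖c + z‖ = 1 := by
  have hsmall : ‖(c - 1) + (z - 1)‖ < 1 :=
    (IsUltrametricDist.norm_add_le_max _ _).trans_lt (max_lt hc hz)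
  rw [show c + z = (1 + 1) + ((c - 1) + (z - 1)) by abel, one_add_one_eq_two,
    IsUltrametricDist.norm_add_eq_max_of_norm_ne_norm (h2 ▸ hsmall.ne'), h2,
    max_eq_left hsmall.le]

end Ultrametric

lemma linearFractional_sub {K : Type*} [Field K] {a b c x y : K} (hx : c + x ≠ 0)
    (hy : c + y ≠ 0) :
    (a * x + b) / (c + x) - (a * y + b) / (c + y) = (a * c - b) * (x - y) / ((c + x) * (c + y)) := by
  field_simp
  ring

namespace Padic

variable {p : ℕ} [Fact p.Prime]

lemma norm_two_eq_one_of_three_le (hp : 3 ≤ p) : ‖(2 : ℚ_[p])‖ = 1 := by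
  rw [show (2 : ℚ_[p]) = (2 : ℕ) by norm_num, norm_natCast_eq_one_iff,
    Nat.coprime_primes Fact.out Nat.prime_two]
  omega

lemma norm_factorial (n : ℕ) : ‖(n ! : ℚ_[p])‖ = (p : ℝ)⁻¹ ^ padicValNat p n ! := by
  rw [norm_eq_zpow_neg_valuation (mod_cast n.factorial_ne_zero), valuation_natCast, zpow_neg,
    zpow_natCast, inv_pow]

lemma norm_pow_div_factorial_le {u : ℚ_[p]} (hu : ‖u‖ ≤ (p : ℝ)⁻¹) (n : ℕ) :
    ‖u ^ n / (n ! : ℚ_[p])‖ ≤ (p : ℝ)⁻¹ ^ (n - padicValNat p n !) := by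
  have hp : (p : ℝ)⁻¹ ≠ 0 := inv_ne_zero (mod_cast (Fact.out : p.Prime).ne_zero)
  rw [norm_div, norm_pow, norm_factorial, pow_sub₀ _ hp (padicValNat_factorial_le p n),
    ← div_eq_mul_inv]
  gcongr

lemma two_mul_padicValNat_factorial_le (hp : 3 ≤ p) (n : ℕ) : 2 * padicValNat p n ! ≤ n :=
  calc 2 * padicValNat p n ! ≤ (p - 1) * padicValNat p n ! := by gcongr; omega
    _ = n - (p.digits n).sum := sub_one_mul_padicValNat_factorial n
    _ ≤ n := Nat.sub_le _ _

lemma summable_pow_div_factorial (hp : 3 ≤ p) {u : ℚ_[p]} (hu : ‖u‖ ≤ (p : ℝ)⁻¹) :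
    Summable fun n : ℕ ↦ u ^ n / n ! := by
  have hp1 : (1 : ℝ) < p := mod_cast (Fact.out : p.Prime).one_lt
  have hexp : Tendsto (fun n ↦ n - padicValNat p n !) atTop atTop :=
    tendsto_atTop_atTop.mpr fun b ↦ ⟨2 * b, fun n hn ↦ by
      have := two_mul_padicValNat_factorial_le hp n; omega⟩
  refine NonarchimedeanAddGroup.summable_of_tendsto_cofinite_zero ?_
  rw [Nat.cofinite_eq_atTop]
  exact squeeze_zero_norm (norm_pow_div_factorial_le hu) <|
    (tendsto_pow_atTop_nhds_zero_of_lt_one (by positivity) (inv_lt_one_of_one_lt₀ hp1)).comp hexp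

end Padic

open Padic in
lemma norm_pexp_sub_one_le {p : ℕ} [Fact p.Prime] (hp : 3 ≤ p) {u : ℚ_[p]}
    (hu : ‖u‖ ≤ (p : ℝ)⁻¹) : ‖pexp p u - 1‖ ≤ (p : ℝ)⁻¹ := by
  have hp1 : (1 : ℝ) < p := mod_cast (Fact.out : p.Prime).one_lt
  simp only [pexp, NormedSpace.exp_eq_tsum_div]
  rw [(summable_pow_div_factorial hp hu).tsum_eq_zero_add]
  simp only [pow_zero, Nat.factorial_zero, Nat.cast_one, div_one, add_sub_cancel_left]
  refine IsUltrametricDist.norm_tsum_le_of_forall_le fun n ↦ (norm_pow_div_factorial_le hu _).trans ?_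
  have : padicValNat p (n + 1)! < n + 1 := padicValNat_factorial_lt_of_ne_zero p n.succ_ne_zero
  exact pow_le_of_le_one (by positivity) (inv_lt_one_of_one_lt₀ hp1).le (by omega)

theorem stmt6 (p : ℕ) [Fact p.Prime] (hp : 3 ≤ p) (α β γ : ℚ_[p])
    (hα : ‖α‖ ≤ (p : ℝ)⁻¹) (hβ : ‖β‖ ≤ (p : ℝ)⁻¹) (hγ : ‖γ‖ ≤ (p : ℝ)⁻¹)
    (a b c : ℚ_[p]) (ha : a = pexp p α) (hb : b = pexp p β) (hc : c = pexp p γ)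
    (f : ℚ_[p] → ℚ_[p]) (hf : ∀ x, f x = (a * x + b) / (c + x))
    (x y : ℚ_[p]) (hx : ‖x‖ = 1 ∧ ‖x - 1‖ ≤ (p : ℝ)⁻¹) (hy : ‖y‖ = 1 ∧ ‖y - 1‖ ≤ (p : ℝ)⁻¹) :
    ‖c + x‖ = 1 ∧ ‖c + y‖ = 1 ∧ ‖f x - f y‖ ≤ (p : ℝ)⁻¹ * ‖x - y‖ := by
  have hp1 : (p : ℝ)⁻¹ < 1 := inv_lt_one_of_one_lt₀ (mod_cast (Fact.out : p.Prime).one_lt)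
  have ha1 : ‖a - 1‖ ≤ (p : ℝ)⁻¹ := ha ▸ norm_pexp_sub_one_le hp hα
  have hb1 : ‖b - 1‖ ≤ (p : ℝ)⁻¹ := hb ▸ norm_pexp_sub_one_le hp hβ
  have hc1 : ‖c - 1‖ ≤ (p : ℝ)⁻¹ := hc ▸ norm_pexp_sub_one_le hp hγ
  have hcx : ‖c + x‖ = 1 := norm_add_eq_one_of_norm_sub_one_lt (Padic.norm_two_eq_one_of_three_le hp)
    (hc1.trans_lt hp1) (hx.2.trans_lt hp1)
  have hcy : ‖c + y‖ = 1 := norm_add_eq_one_of_norm_sub_one_lt (Padic.norm_two_eq_one_of_three_le hp)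
    (hc1.trans_lt hp1) (hy.2.trans_lt hp1)
  refine ⟨hcx, hcy, ?_⟩
  rw [hf, hf, linearFractional_sub (norm_ne_zero_iff.mp (by simp [hcx]))
    (norm_ne_zero_iff.mp (by simp [hcy])), norm_div, norm_mul, norm_mul, hcx, hcy, mul_one, div_one]
  gcongr
  exact norm_mul_sub_le_of_norm_sub_one_le hp1.le ha1 hb1 hc1
end

section
/- Let p ≥ 3 be prime, α, β, γ ∈ Q_p with |α|_p, |β|_p, |γ|_p ≤ 1/p, a = exp_p(α), b = exp_p(β), c = exp_p(γ), and F(x) = ((a x + b)/(c + x))^2. Then F maps the set D = {z ∈ Q_p : |z|_p = 1, |z − 1|_p ≤ 1/p} into itself and satisfies |F(x) − F(y)|_p ≤ (1/p)|x − y|_p for all x, y ∈ D; consequently F has a unique fixed point in D. -/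
/-!
Write `B` for the ball `‖z - 1‖ ≤ 1/p`; it is the set `D`. For odd `p`, Legendre's formula gives
`2 v_p(n!) ≤ n`, so the exponential series converges on `‖α‖ ≤ 1/p` and all its terms after the
first have norm `≤ 1/p`: hence `a, b, c ∈ B`. On `B`, `c + x` is close to the unit `2`, the
Möbius map `g x = (a x + b)/(c + x)` maps `B` into `B`, and
`g x - g y = (a c - b)(x - y)/((c + x)(c + y))` with `‖a c - b‖ ≤ 1/p`. Squaring preserves `B`
and is `1`-Lipschitz on the unit ball, so `F = g²` is a `1/p`-contraction of the complete set `B`,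
and the Banach fixed point theorem applies.
-/

open Metric Set Filter
open scoped NNReal Nat

section UltrametricGroup

variable {E : Type*} [SeminormedAddCommGroup E] [IsUltrametricDist E] {r : ℝ} {x y : E}

lemma norm_eq_of_norm_sub_lt (h : ‖x - y‖ < ‖y‖) : ‖x‖ = ‖y‖ := by
  simpa [max_eq_right h.le] using IsUltrametricDist.norm_add_eq_max_of_norm_ne_norm h.ne

lemma norm_add_le_of_norm_le (hx : ‖x‖ ≤ r) (hy : ‖y‖ ≤ r) : ‖x + y‖ ≤ r :=
  (IsUltrametricDist.norm_add_le_max x y).trans (max_le hx hy)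

lemma norm_sub_le_of_norm_le (hx : ‖x‖ ≤ r) (hy : ‖y‖ ≤ r) : ‖x - y‖ ≤ r := by
  simpa [sub_eq_add_neg] using norm_add_le_of_norm_le hx (by rwa [norm_neg] : ‖-y‖ ≤ r)

end UltrametricGroup

section UltrametricField

variable {K : Type*} [NormedField K] {r : ℝ} {a b c x y : K}

lemma norm_mul_le_of_le_of_norm_le_one (hx : ‖x‖ ≤ r) (hy : ‖y‖ ≤ 1) : ‖x * y‖ ≤ r := by
  rw [norm_mul]
  exact (mul_le_of_le_one_right (norm_nonneg x) hy).trans hx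

variable [IsUltrametricDist K]

lemma norm_le_one_of_mem_closedBall_one (hr : r ≤ 1) (hx : x ∈ closedBall (1 : K) r) :
    ‖x‖ ≤ 1 := by
  rw [mem_closedBall_iff_norm] at hx
  simpa using norm_add_le_of_norm_le (hx.trans hr) norm_one.le

lemma norm_eq_one_of_mem_closedBall_one (hr : r < 1) (hx : x ∈ closedBall (1 : K) r) :
    ‖x‖ = 1 := by
  rw [mem_closedBall_iff_norm] at hx
  simpa using norm_eq_of_norm_sub_lt (hx.trans_lt (by simpa using hr))

lemma setOf_norm_eq_one_and_norm_sub_one_le (hr : r < 1) :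
    {z : K | ‖z‖ = 1 ∧ ‖z - 1‖ ≤ r} = closedBall 1 r := by
  ext z
  rw [mem_closedBall_iff_norm]
  exact ⟨And.right, fun hz => ⟨norm_eq_one_of_mem_closedBall_one hr
    (mem_closedBall_iff_norm.2 hz), hz⟩⟩

lemma mul_mem_closedBall_one (hr : r ≤ 1) (hx : x ∈ closedBall (1 : K) r)
    (hy : y ∈ closedBall (1 : K) r) : x * y ∈ closedBall (1 : K) r := by
  have hy1 := norm_le_one_of_mem_closedBall_one hr hy
  rw [mem_closedBall_iff_norm] at hx hy ⊢
  rw [show x * y - 1 = (x - 1) * y + (y - 1) by ring]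
  exact norm_add_le_of_norm_le (norm_mul_le_of_le_of_norm_le_one hx hy1) hy

lemma norm_sq_sub_sq_le (hx : ‖x‖ ≤ 1) (hy : ‖y‖ ≤ 1) : ‖x ^ 2 - y ^ 2‖ ≤ ‖x - y‖ := by
  rw [sq_sub_sq, mul_comm]
  exact norm_mul_le_of_le_of_norm_le_one le_rfl
    ((IsUltrametricDist.norm_add_le_max x y).trans (max_le hx hy))

variable (h2 : ‖(2 : K)‖ = 1) (hr : r < 1)
include h2 hr

lemma norm_add_eq_one_of_mem_closedBall_one (hx : x ∈ closedBall (1 : K) r)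
    (hy : y ∈ closedBall (1 : K) r) : ‖x + y‖ = 1 := by
  rw [mem_closedBall_iff_norm] at hx hy
  rw [← h2]
  refine norm_eq_of_norm_sub_lt ?_
  rw [h2, show x + y - 2 = (x - 1) + (y - 1) by ring]
  exact (norm_add_le_of_norm_le hx hy).trans_lt hr

variable (ha : a ∈ closedBall (1 : K) r) (hb : b ∈ closedBall (1 : K) r)
  (hc : c ∈ closedBall (1 : K) r)
include ha hb hc

lemma div_mem_closedBall_one (hx : x ∈ closedBall (1 : K) r) :
    (a * x + b) / (c + x) ∈ closedBall (1 : K) r := by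
  have hcx := norm_add_eq_one_of_mem_closedBall_one h2 hr hc hx
  have hx1 := norm_le_one_of_mem_closedBall_one hr.le hx
  rw [mem_closedBall_iff_norm] at ha hb hc ⊢
  have hcx0 : c + x ≠ 0 := norm_ne_zero_iff.1 (by simp [hcx])
  rw [div_sub_one hcx0, norm_div, hcx, div_one,
    show a * x + b - (c + x) = (a - 1) * x + (b - 1) - (c - 1) by ring]
  exact norm_sub_le_of_norm_le
    (norm_add_le_of_norm_le (norm_mul_le_of_le_of_norm_le_one ha hx1) hb) hc

lemma norm_div_sub_div_le (hx : x ∈ closedBall (1 : K) r) (hy : y ∈ closedBall (1 : K) r) :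
    ‖(a * x + b) / (c + x) - (a * y + b) / (c + y)‖ ≤ r * ‖x - y‖ := by
  have hcx := norm_add_eq_one_of_mem_closedBall_one h2 hr hc hx
  have hcy := norm_add_eq_one_of_mem_closedBall_one h2 hr hc hy
  have ha1 := norm_le_one_of_mem_closedBall_one hr.le ha
  have hcx0 : c + x ≠ 0 := norm_ne_zero_iff.1 (by simp [hcx])
  have hcy0 : c + y ≠ 0 := norm_ne_zero_iff.1 (by simp [hcy])
  rw [mem_closedBall_iff_norm] at ha hb hc
  have hacb : ‖a * c - b‖ ≤ r := by
    rw [show a * c - b = (c - 1) * a + (a - 1) - (b - 1) by ring]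
    exact norm_sub_le_of_norm_le
      (norm_add_le_of_norm_le (norm_mul_le_of_le_of_norm_le_one hc ha1) ha) hb
  rw [div_sub_div _ _ hcx0 hcy0, show (a * x + b) * (c + y) - (c + x) * (a * y + b)
    = (a * c - b) * (x - y) by ring, norm_div, norm_mul, norm_mul, hcx, hcy,
    mul_one, div_one]
  exact mul_le_mul_of_nonneg_right hacb (norm_nonneg _)

lemma mapsTo_sq_div : MapsTo (fun x => ((a * x + b) / (c + x)) ^ 2) (closedBall 1 r)
    (closedBall 1 r) := fun x hx => by
  have h := div_mem_closedBall_one h2 hr ha hb hc hx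
  simpa [sq] using mul_mem_closedBall_one hr.le h h

lemma norm_sq_div_sub_sq_div_le (hx : x ∈ closedBall (1 : K) r)
    (hy : y ∈ closedBall (1 : K) r) :
    ‖((a * x + b) / (c + x)) ^ 2 - ((a * y + b) / (c + y)) ^ 2‖ ≤ r * ‖x - y‖ := by
  have hgx := div_mem_closedBall_one h2 hr ha hb hc hx
  have hgy := div_mem_closedBall_one h2 hr ha hb hc hy
  calc _ ≤ ‖(a * x + b) / (c + x) - (a * y + b) / (c + y)‖ :=
        norm_sq_sub_sq_le (norm_le_one_of_mem_closedBall_one hr.le hgx)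
          (norm_le_one_of_mem_closedBall_one hr.le hgy)
    _ ≤ r * ‖x - y‖ := norm_div_sub_div_le h2 hr ha hb hc hx hy

end UltrametricField

theorem existsUnique_fixedPoint_of_mapsTo {α : Type*} [MetricSpace α] {f : α → α} {s : Set α}
    {K : ℝ≥0} (hK : K < 1) (hsc : IsComplete s) (hne : s.Nonempty) (hsf : MapsTo f s s)
    (hlip : ∀ x ∈ s, ∀ y ∈ s, dist (f x) (f y) ≤ K * dist x y) : ∃! u, u ∈ s ∧ f u = u := by
  have hf : ContractingWith K (hsf.restrict f s s) :=
    ⟨hK, LipschitzWith.of_dist_le_mul fun x y => hlip x x.2 y y.2⟩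
  obtain ⟨x, hx⟩ := hne
  obtain ⟨u, hu, hfu, -⟩ := hf.exists_fixedPoint' hsc hsf hx (edist_ne_top _ _)
  refine ⟨u, ⟨hu, hfu⟩, fun v ⟨hv, hfv⟩ => ?_⟩
  have := hf.fixedPoint_unique' (x := ⟨v, hv⟩) (y := ⟨u, hu⟩) (Subtype.ext hfv) (Subtype.ext hfu)
  exact congrArg Subtype.val this

namespace Padic

variable {p : ℕ} [Fact p.Prime]

lemma norm_natCast_eq_inv_pow_padicValNat {n : ℕ} (hn : n ≠ 0) :
    ‖(n : ℚ_[p])‖ = (p : ℝ)⁻¹ ^ padicValNat p n := by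
  rw [norm_eq_zpow_neg_valuation (Nat.cast_ne_zero.2 hn), valuation_natCast, zpow_neg,
    zpow_natCast, inv_pow]

lemma norm_inv_factorial_smul_pow_le {α : ℚ_[p]} (hα : ‖α‖ ≤ (p : ℝ)⁻¹) (n : ℕ) :
    ‖(n ! : ℚ_[p])⁻¹ • α ^ n‖ ≤ (p : ℝ)⁻¹ ^ (n - padicValNat p n !) := by
  have hp : (p : ℝ)⁻¹ ≠ 0 := inv_ne_zero (Nat.cast_ne_zero.2 (Fact.out : p.Prime).ne_zero)
  rw [norm_smul, norm_inv, norm_pow, norm_natCast_eq_inv_pow_padicValNat n.factorial_ne_zero,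
    pow_sub₀ _ hp (padicValNat_factorial_le p n), mul_comm]
  gcongr

end Padic

lemma two_mul_padicValNat_factorial_le {p : ℕ} [Fact p.Prime] (hp : 3 ≤ p) (n : ℕ) :
    2 * padicValNat p n ! ≤ n :=
  calc 2 * padicValNat p n ! ≤ (p - 1) * padicValNat p n ! := by gcongr; omega
    _ = n - (p.digits n).sum := sub_one_mul_padicValNat_factorial n
    _ ≤ n := Nat.sub_le _ _

lemma tendsto_sub_padicValNat_factorial {p : ℕ} [Fact p.Prime] (hp : 3 ≤ p) :
    Tendsto (fun n => n - padicValNat p n !) atTop atTop :=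
  tendsto_atTop_mono (fun n => by have := two_mul_padicValNat_factorial_le hp n; omega)
    (Nat.tendsto_div_const_atTop two_ne_zero)

lemma pexp_mem_closedBall_one {p : ℕ} [Fact p.Prime] (hp : 3 ≤ p) {α : ℚ_[p]}
    (hα : ‖α‖ ≤ (p : ℝ)⁻¹) : pexp p α ∈ closedBall 1 (p : ℝ)⁻¹ := by
  have hq1 : (p : ℝ)⁻¹ < 1 := inv_lt_one_of_one_lt₀ (by exact_mod_cast (by omega : 1 < p))
  have hq0 : (0 : ℝ) ≤ (p : ℝ)⁻¹ := by positivity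
  set f : ℕ → ℚ_[p] := fun n => (n ! : ℚ_[p])⁻¹ • α ^ n
  have hf : Summable f := by
    refine NonarchimedeanAddGroup.summable_of_tendsto_cofinite_zero ?_
    rw [Nat.cofinite_eq_atTop, tendsto_zero_iff_norm_tendsto_zero]
    exact squeeze_zero (fun _ => norm_nonneg _) (Padic.norm_inv_factorial_smul_pow_le hα)
      ((tendsto_pow_atTop_nhds_zero_of_lt_one hq0 hq1).comp (tendsto_sub_padicValNat_factorial hp))
  rw [mem_closedBall_iff_norm, pexp, NormedSpace.exp_eq_tsum ℚ_[p]]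
  beta_reduce
  rw [hf.tsum_eq_zero_add]
  simp only [f, Nat.factorial_zero, Nat.cast_one, inv_one, pow_zero, one_smul, add_sub_cancel_left]
  refine IsUltrametricDist.norm_tsum_le_of_forall_le_of_nonneg hq0 fun n => ?_
  refine (Padic.norm_inv_factorial_smul_pow_le hα (n + 1)).trans (pow_le_of_le_one hq0 hq1.le ?_)
  have := padicValNat_factorial_lt_of_ne_zero p n.add_one_ne_zero
  omega

theorem stmt8 (p : ℕ) [Fact p.Prime] (hp : 3 ≤ p) (α β γ : ℚ_[p])
    (hα : ‖α‖ ≤ (p : ℝ)⁻¹) (hβ : ‖β‖ ≤ (p : ℝ)⁻¹) (hγ : ‖γ‖ ≤ (p : ℝ)⁻¹)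
    (a b c : ℚ_[p]) (ha : a = pexp p α) (hb : b = pexp p β) (hc : c = pexp p γ)
    (F : ℚ_[p] → ℚ_[p]) (hF : ∀ x, F x = ((a * x + b) / (c + x)) ^ 2)
    (D : Set ℚ_[p]) (hD : D = {z : ℚ_[p] | ‖z‖ = 1 ∧ ‖z - 1‖ ≤ (p : ℝ)⁻¹}) :
    (Set.MapsTo F D D) ∧
    (∀ x ∈ D, ∀ y ∈ D, ‖F x - F y‖ ≤ (p : ℝ)⁻¹ * ‖x - y‖) ∧
    (∃! u, u ∈ D ∧ F u = u) := by
  have hq : (p : ℝ)⁻¹ < 1 := inv_lt_one_of_one_lt₀ (by exact_mod_cast (by omega : 1 < p))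
  have h2 : ‖(2 : ℚ_[p])‖ = 1 := by
    simpa using Padic.norm_natCast_eq_one_iff.2
      ((Nat.coprime_primes Fact.out Nat.prime_two).2 (by omega))
  have ha' := ha ▸ pexp_mem_closedBall_one hp hα
  have hb' := hb ▸ pexp_mem_closedBall_one hp hβ
  have hc' := hc ▸ pexp_mem_closedBall_one hp hγ
  obtain rfl : F = fun x => ((a * x + b) / (c + x)) ^ 2 := funext hF
  rw [setOf_norm_eq_one_and_norm_sub_one_le hq] at hD
  subst hD
  have hmaps := mapsTo_sq_div h2 hq ha' hb' hc'
  have hlip : ∀ x ∈ closedBall (1 : ℚ_[p]) (p : ℝ)⁻¹, ∀ y ∈ closedBall (1 : ℚ_[p]) (p : ℝ)⁻¹,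
      ‖((a * x + b) / (c + x)) ^ 2 - ((a * y + b) / (c + y)) ^ 2‖ ≤ (p : ℝ)⁻¹ * ‖x - y‖ :=
    fun x hx y hy => norm_sq_div_sub_sq_div_le h2 hq ha' hb' hc' hx hy
  refine ⟨hmaps, hlip, existsUnique_fixedPoint_of_mapsTo (K := (p : ℝ≥0)⁻¹) ?_
    isClosed_closedBall.isComplete ⟨1, mem_closedBall_self (by positivity)⟩ hmaps
    fun x hx y hy => by simpa [dist_eq_norm] using hlip x hx y hy⟩
  rw [← NNReal.coe_lt_coe]
  simpa using hq
end
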